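/- arXiv:2305.07177 — 3 statements merged into one kernel-verified Lean document; each statement's English description precedes it below -/
import Mathlib

section
/- Let FH be a Frobenius group with complement H and kernel F, where F is a non-metacyclic finite 3-group. Then the center Z(F) contains an elementary abelian subgroup of order 27 (i.e., Z(F) has rank at least 3). -/
/-!
Pick `t ∈ H` of prime order `q`. Conjugation by `t` is a fixed-point-free automorphism `σ` of `F`
with `σ ^ q = 1`; it restricts to the characteristic subgroup `Ω₁(Z(F))`, whose nontrivial elements
therefore fall into `σ`-orbits of size `q`, so `|Ω₁(Z(F))| ≡ 1 [MOD q]`. If `|Ω₁(Z(F))|` were `3`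
or `9`, then `q ∣ 2` or `q ∣ 8`, so `q = 2`. A fixed-point-free involution inverts every element,
so `F` would be abelian, and an abelian `3`-group with at most nine solutions of `x ^ 3 = 1` has at
most two cyclic factors, hence is metacyclic.
-/

/-- A group is metacyclic if it has a cyclic normal subgroup with cyclic quotient.
(Using normality of `N`, cyclicity of the quotient `A ⧸ N` is expressed by the existence of a
single element `g` with `N ⊔ ⟨g⟩ = ⊤`.) -/
def IsMetacyclic (A : Type*) [Group A] : Prop :=
  ∃ N : Subgroup A, N.Normal ∧ IsCyclic N ∧ ∃ g : A, N ⊔ Subgroup.zpowers g = ⊤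

open Subgroup MonoidHom

theorem IsMetacyclic.of_subsingleton {G : Type*} [Group G] [Subsingleton G] : IsMetacyclic G :=
  ⟨⊥, inferInstance, inferInstance, 1, Subsingleton.elim _ _⟩

theorem IsMetacyclic.of_rank_le_two {G : Type*} [CommGroup G] [Group.FG G]
    (h : Group.rank G ≤ 2) : IsMetacyclic G := by
  classical
  obtain ⟨S, hS, hcl⟩ := Group.rank_spec G
  obtain ⟨a, b, hab⟩ : ∃ a b : G, S ⊆ {a, b} := by
    have : S.card ≤ 2 := hS ▸ h
    interval_cases hc : S.card
    · exact ⟨1, 1, by simp [Finset.card_eq_zero.1 hc]⟩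
    · obtain ⟨a, rfl⟩ := Finset.card_eq_one.1 hc
      exact ⟨a, a, by simp⟩
    · obtain ⟨a, b, -, rfl⟩ := Finset.card_eq_two.1 hc
      exact ⟨a, b, subset_rfl⟩
  refine ⟨zpowers a, normal_of_isMulCommutative _, inferInstance, b, eq_top_iff.2 ?_⟩
  rw [← hcl, closure_le]
  intro x hx
  rcases Finset.mem_insert.1 (hab hx) with rfl | hx
  · exact mem_sup_left (mem_zpowers x)
  · exact mem_sup_right (Finset.mem_singleton.1 hx ▸ mem_zpowers b)

theorem Group.rank_pi_le_card {ι : Type*} [Fintype ι] {G : ι → Type*} [∀ i, Group (G i)]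
    [∀ i, IsCyclic (G i)] [Group.FG (∀ i, G i)] : Group.rank (∀ i, G i) ≤ Fintype.card ι := by
  classical
  choose g hg using fun i => IsCyclic.exists_generator (α := G i)
  refine (Group.rank_le (S := Finset.univ.image fun i => Pi.mulSingle i (g i)) ?_).trans
    Finset.card_image_le
  refine eq_top_iff.2 fun x _ => pi_mem_of_mulSingle_mem x fun i => ?_
  obtain ⟨k, hk⟩ := mem_zpowers_iff.1 (hg i (x i))
  rw [← hk, Pi.mulSingle_zpow]
  exact zpow_mem (subset_closure (by simp)) k

theorem IsPGroup.exists_orderOf_eq_prime {G : Type*} [Group G] [Finite G] [Nontrivial G]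
    {p : ℕ} [Fact p.Prime] (hG : IsPGroup p G) : ∃ g : G, orderOf g = p := by
  obtain ⟨k, hk, hcard⟩ := hG.nontrivial_iff_card.1 ‹_›
  exact exists_prime_orderOf_dvd_card' p (hcard ▸ dvd_pow_self p hk.ne')

theorem le_card_pow_eq_one_of_orderOf_eq {G : Type*} [Group G] [Finite G] {g : G} {n : ℕ}
    (hg : orderOf g = n) : n ≤ Nat.card {x : G // x ^ n = 1} := by
  subst hg
  calc orderOf g = Nat.card (zpowers g) := (Nat.card_zpowers g).symm
    _ ≤ _ := Nat.card_le_card_of_injective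
      (fun x => ⟨x, orderOf_dvd_iff_pow_eq_one.1 (orderOf_dvd_of_mem_zpowers x.2)⟩)
      fun x y hxy => Subtype.ext (by simpa using hxy)

theorem pow_card_le_card_pi_pow_eq_one {ι : Type*} [Fintype ι] {G : ι → Type*}
    [∀ i, Group (G i)] [∀ i, Finite (G i)] {n : ℕ} (h : ∀ i, ∃ g : G i, orderOf g = n) :
    n ^ Fintype.card ι ≤ Nat.card {x : ∀ i, G i // x ^ n = 1} := by
  let e : {x : ∀ i, G i // x ^ n = 1} ≃ ∀ i, {y : G i // y ^ n = 1} :=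
    (Equiv.subtypeEquivRight (q := fun x : ∀ i, G i => ∀ i, x i ^ n = 1) fun x => funext_iff).trans
      (Equiv.subtypePiEquivPi (p := fun i (y : G i) => y ^ n = 1))
  rw [Nat.card_congr e, Nat.card_pi]
  exact Finset.pow_card_le_prod _ _ _ fun i _ =>
    let ⟨g, hg⟩ := h i
    le_card_pow_eq_one_of_orderOf_eq hg

theorem IsMetacyclic.of_card_pow_eq_one_lt {G : Type*} [CommGroup G] [Finite G] {p : ℕ}
    [hp : Fact p.Prime] (hG : IsPGroup p G) (h : Nat.card {x : G // x ^ p = 1} < p ^ 3) :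
    IsMetacyclic G := by
  obtain ⟨ι, _, n, hn, ⟨e⟩⟩ := CommGroup.equiv_prod_multiplicative_zmod_of_finite G
  have : ∀ i, NeZero (n i) := fun i => ⟨(zero_lt_one.trans (hn i)).ne'⟩
  have hord : ∀ i, ∃ c : Multiplicative (ZMod (n i)), orderOf c = p := fun i => by
    have : Fact (1 < n i) := ⟨hn i⟩
    exact (hG.of_surjective ((Pi.evalMonoidHom _ i).comp e.toMonoidHom)
      ((Function.surjective_eval i).comp e.surjective)).exists_orderOf_eq_prime
  have hcard : Nat.card {x : G // x ^ p = 1} =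
      Nat.card {x : ∀ i, Multiplicative (ZMod (n i)) // x ^ p = 1} :=
    Nat.card_congr (e.toEquiv.subtypeEquiv fun x => by simp [← map_pow, e.map_eq_one_iff])
  have hι : Fintype.card ι ≤ 2 := by
    by_contra! hι
    exact lt_irrefl _ (((Nat.pow_le_pow_right hp.out.pos hι).trans
      ((pow_card_le_card_pi_pow_eq_one hord).trans hcard.ge)).trans_lt h)
  exact IsMetacyclic.of_rank_le_two ((Group.rank_congr e).le.trans (Group.rank_pi_le_card.trans hι))

namespace Subgroup

variable (G : Type*) [Group G] (n : ℕ)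

/-- `Ω₁(Z(G))` when `n` is prime. -/
def centerOmega : Subgroup G where
  carrier := {z | z ∈ center G ∧ z ^ n = 1}
  mul_mem' := fun {a b} ⟨ha, ha'⟩ ⟨hb, hb'⟩ =>
    ⟨mul_mem ha hb, by
      rw [Commute.mul_pow (mem_center_iff.1 hb a), ha', hb', one_mul]⟩
  one_mem' := ⟨one_mem _, one_pow n⟩
  inv_mem' := fun ⟨ha, ha'⟩ => ⟨inv_mem ha, by rw [inv_pow, ha', inv_one]⟩

variable {G n}

theorem mem_centerOmega {z : G} : z ∈ centerOmega G n ↔ z ∈ center G ∧ z ^ n = 1 :=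
  Iff.rfl

instance centerOmega_characteristic : (centerOmega G n).Characteristic :=
  characteristic_iff_le_comap.2 fun φ _ ⟨hz, hzn⟩ =>
    ⟨characteristic_iff_le_comap.1 inferInstance φ hz, by simp [← map_pow, hzn]⟩

theorem centerOmega_ne_bot [Finite G] [Nontrivial G] {p : ℕ} [Fact p.Prime] (hG : IsPGroup p G) :
    centerOmega G p ≠ ⊥ := by
  have : Nontrivial (center G) := hG.center_nontrivial
  obtain ⟨z, hz⟩ := (hG.to_subgroup (center G)).exists_orderOf_eq_prime
  rw [← orderOf_coe] at hz
  refine ne_bot_iff_exists_ne_one.2 ⟨⟨z, z.2, hz ▸ pow_orderOf_eq_one _⟩, fun h => ?_⟩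
  rw [show (z : G) = 1 from congrArg Subtype.val h, orderOf_one] at hz
  exact (Fact.out : p.Prime).one_lt.ne hz

theorem card_centerOmega_of_commGroup {G : Type*} [CommGroup G] :
    Nat.card (centerOmega G n) = Nat.card {x : G // x ^ n = 1} :=
  Nat.card_congr <| Equiv.subtypeEquivRight fun x => by
    simp [mem_centerOmega, CommGroup.center_eq_top]

end Subgroup

namespace MonoidHom.FixedPointFree

variable {G : Type*} [Group G] {σ : MulAut G}

theorem mulAutCharacteristic (hσ : FixedPointFree σ) (H : Subgroup G) [H.Characteristic] :
    FixedPointFree (MulAut.characteristic H σ) :=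
  fun h hh => Subtype.ext (hσ h (congrArg Subtype.val hh))

theorem card_modEq_one [Finite G] (hσ : FixedPointFree σ) {q : ℕ} [Fact q.Prime]
    (hq : σ ^ q = 1) : Nat.card G ≡ 1 [MOD q] := by
  have hQ : IsPGroup q (zpowers σ) := isPGroup_iff_orderOf_dvd_pow.2 fun g => ⟨1, by
    rw [pow_one, ← orderOf_coe]
    exact (orderOf_dvd_of_mem_zpowers g.2).trans (orderOf_dvd_of_pow_eq_one hq)⟩
  have hfix : MulAction.fixedPoints (zpowers σ) G = {1} := by
    ext x
    refine ⟨fun hx => hσ x (hx ⟨σ, mem_zpowers σ⟩), fun hx => ?_⟩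
    rw [Set.mem_singleton_iff.1 hx]
    exact fun g => smul_one g
  simpa [hfix] using hQ.card_modEq_card_fixedPoints G

end MonoidHom.FixedPointFree

theorem MulAut.fixedPointFree_conjNormal {G : Type*} [Group G] {N : Subgroup G} [N.Normal] {t : G}
    (ht : ∀ n ∈ N, t * n = n * t → n = 1) : FixedPointFree (MulAut.conjNormal t : MulAut N) :=
  fun n hn => Subtype.ext (ht n n.2 (mul_inv_eq_iff_eq_mul.1 (congrArg Subtype.val hn)))

theorem Nat.eq_two_of_three_pow_modEq_one {q k : ℕ} (hq : q.Prime) (hk₁ : 1 ≤ k) (hk₂ : k ≤ 2)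
    (h : 3 ^ k ≡ 1 [MOD q]) : q = 2 := by
  have hdvd : q ∣ 3 ^ k - 1 := (Nat.modEq_iff_dvd' (Nat.one_le_pow _ _ (by norm_num))).1 h.symm
  interval_cases k
  · exact (Nat.prime_dvd_prime_iff_eq hq Nat.prime_two).1 hdvd
  · exact (Nat.prime_dvd_prime_iff_eq hq Nat.prime_two).1 (hq.dvd_of_dvd_pow (n := 3) hdvd)

theorem IsPGroup.three_pow_three_le_card_centerOmega {F : Type*} [Group F] [Finite F]
    (hF : IsPGroup 3 F) (hnm : ¬ IsMetacyclic F) {σ : MulAut F} (hσ : FixedPointFree σ)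
    {q : ℕ} (hq : q.Prime) (hσq : σ ^ q = 1) : 3 ^ 3 ≤ Nat.card (centerOmega F 3) := by
  have : Fact q.Prime := ⟨hq⟩
  have : Fact (Nat.Prime 3) := ⟨Nat.prime_three⟩
  have : Nontrivial F := not_subsingleton_iff_nontrivial.1 fun _ => hnm .of_subsingleton
  obtain ⟨k, hk⟩ := (hF.to_subgroup (centerOmega F 3)).exists_card_eq
  have hk₁ : 1 ≤ k := by
    by_contra! hk₀
    rw [Nat.lt_one_iff.1 hk₀, pow_zero, card_eq_one] at hk
    exact centerOmega_ne_bot hF hk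
  have hmod : 3 ^ k ≡ 1 [MOD q] := hk ▸ (hσ.mulAutCharacteristic _).card_modEq_one
    (by rw [← map_pow, hσq, map_one])
  by_contra! hlt
  have hk₂ : k ≤ 2 := by
    by_contra! hk₂
    exact hlt.not_ge (hk ▸ Nat.pow_le_pow_right (by norm_num) hk₂)
  have hq2 := Nat.eq_two_of_three_pow_modEq_one hq hk₁ hk₂ hmod
  have hinv : Function.Involutive σ := fun x => by
    rw [← MulAut.mul_apply, ← sq, ← hq2, hσq, MulAut.one_apply]
  let : CommGroup F := hσ.commGroupOfInvolutive hinv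
  exact hnm (.of_card_pow_eq_one_lt hF ((card_centerOmega_of_commGroup (G := F)).symm.trans_lt hlt))

theorem frobenius_nonmetacyclic_3group_kernel_center_rank_ge_three_general
    (A : Type*) [Group A] [Finite A] (F H : Subgroup A)
    (hFnorm : F.Normal) (hHnt : H ≠ ⊥)
    (hfrob : ∀ x ∈ H, x ≠ 1 → ∀ f ∈ F, x * f = f * x → f = 1)
    (hF3 : IsPGroup 3 F) (hnm : ¬ IsMetacyclic F) :
    ∃ E : Subgroup F, E ≤ Subgroup.center F ∧ Nat.card E = 27 ∧
      (∀ x ∈ E, x ^ 3 = 1) ∧ ∀ x ∈ E, ∀ y ∈ E, x * y = y * x := by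
  obtain ⟨q, hq, hqH⟩ := Nat.exists_prime_and_dvd ((one_lt_card_iff_ne_bot H).2 hHnt).ne'
  have : Fact q.Prime := ⟨hq⟩
  obtain ⟨t, htq⟩ := exists_prime_orderOf_dvd_card' q hqH
  have ht1 : (t : A) ≠ 1 := fun h => hq.one_lt.ne' (by rw [← htq, ← orderOf_coe, h, orderOf_one])
  have hσ := MulAut.fixedPointFree_conjNormal (N := F) (hfrob t t.2 ht1)
  have hσq : MulAut.conjNormal (t : A) ^ q = (1 : MulAut F) := by
    rw [← map_pow, ← htq, ← orderOf_coe, pow_orderOf_eq_one, map_one]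
  obtain ⟨E, hEΩ, hE⟩ := Sylow.exists_subgroup_le_card_pow_prime_of_le_card Nat.prime_three hF3
    (hF3.three_pow_three_le_card_centerOmega hnm hσ hq hσq)
  exact ⟨E, fun x hx => (hEΩ hx).1, hE, fun x hx => (hEΩ hx).2,
    fun x hx y _ => (mem_center_iff.1 (hEΩ hx).1 y).symm⟩

/-- If `FH` is a Frobenius group (here the finite group `A` with normal subgroup `F` and
complement `H`, so `A = F ⋊ H` and `C_F(h) = 1` for all `1 ≠ h ∈ H`) whose kernel `F` is a
non-metacyclic finite `3`-group, then the center `Z(F)` contains an elementary abelian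
subgroup of order `27`, i.e. `Z(F)` has rank at least `3`. -/
theorem frobenius_nonmetacyclic_3group_kernel_center_rank_ge_three
    (A : Type*) [Group A] [Finite A] (F H : Subgroup A)
    (hFnorm : F.Normal) (hFH : F ⊓ H = ⊥) (hFHtop : F ⊔ H = ⊤)
    (hFnt : F ≠ ⊥) (hHnt : H ≠ ⊥)
    (hfrob : ∀ x ∈ H, x ≠ 1 → ∀ f ∈ F, x * f = f * x → f = 1)
    (hF3 : IsPGroup 3 F) (hnm : ¬ IsMetacyclic F) :
    ∃ E : Subgroup F, E ≤ Subgroup.center F ∧ Nat.card E = 27 ∧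
      (∀ x ∈ E, x ^ 3 = 1) ∧ ∀ x ∈ E, ∀ y ∈ E, x * y = y * x :=
  frobenius_nonmetacyclic_3group_kernel_center_rank_ge_three_general A F H hFnorm hHnt hfrob hF3 hnm
end

section
/- Under the standing setup, the fixed-point subalgebra L_0 = C_L(Z) satisfies L_0 = C_L(F) + Σ_{f∈F} C_L(ZH^f), where the sum on the right is the sum of R-submodules and ZH^f denotes the subgroup generated by Z and the conjugate subgroup H^f = f^{-1}Hf. -/
/-! Let `x ∈ C_L(Z)` and `n = |F|`. The non-identity elements of the
conjugates `H^f`, `f ∈ F`, partition `FH \ F`, each element occurring once, so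
`n • x = ∑_f ∑_{h ∈ H} x^(f⁻¹hf) + (∑_{f ∈ F} x^f - ∑_{g ∈ FH} x^g)`.
The `f`-th inner sum is fixed by `H^f`, and by `Z` because `Z` is normal; the bracket is fixed
by `F`. As `n = p²` is invertible in `R`, `x` lies in `C_L(F) + ∑_f C_L(Z H^f)`. -/

/-- A group is supersolvable if it has a normal series with cyclic factors all of whose terms
are normal in the whole group.  (Using normality of `s i`, cyclicity of the factor
`s (i+1) ⧸ s i` is expressed by `s (i+1) = s i ⊔ ⟨g⟩` for a single element `g`.) -/
def IsSupersolvable (G : Type*) [Group G] : Prop :=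
  ∃ (n : ℕ) (s : ℕ → Subgroup G), s 0 = ⊥ ∧ s n = ⊤ ∧ (∀ i, (s i).Normal) ∧
    ∀ i < n, ∃ g : G, s (i + 1) = s i ⊔ Subgroup.zpowers g

/-- The fixed-point submodule `C_L(S)` of a set `S` of Lie-algebra automorphisms acting on `L`
via `ρ`.  (It is in fact a Lie subalgebra.) -/
def fixSub {A R L : Type*} [Group A] [CommRing R] [LieRing L] [LieAlgebra R L]
    (ρ : A → (L ≃ₗ⁅R⁆ L)) (S : Set A) : Submodule R L where
  carrier := {x | ∀ g ∈ S, ρ g x = x}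
  add_mem' := by
    intro x y hx hy g hg
    calc (ρ g) (x + y) = (ρ g) x + (ρ g) y := (ρ g).toLieHom.map_add x y
    _ = x + y := by rw [hx g hg, hy g hg]
  zero_mem' := fun g _ => (ρ g).toLieHom.map_zero
  smul_mem' := by
    intro r x hx g hg
    calc (ρ g) (r • x) = r • (ρ g) x := (ρ g).toLieHom.map_smul r x
    _ = r • x := by rw [hx g hg]

/-- The eigenspace of a Lie-algebra automorphism `e` for the eigenvalue `μ`. -/
def eigSp {R L : Type*} [CommRing R] [LieRing L] [LieAlgebra R L]
    (e : L ≃ₗ⁅R⁆ L) (μ : R) : Submodule R L where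
  carrier := {x | e x = μ • x}
  add_mem' := by
    intro x y hx hy
    simp only [Set.mem_setOf_eq] at *
    calc e (x + y) = e x + e y := e.toLieHom.map_add x y
    _ = μ • (x + y) := by rw [hx, hy, smul_add]
  zero_mem' := by
    show e 0 = μ • (0 : L)
    rw [smul_zero]; exact e.toLieHom.map_zero
  smul_mem' := by
    intro r x hx
    simp only [Set.mem_setOf_eq] at *
    calc e (r • x) = r • e x := e.toLieHom.map_smul r x
    _ = μ • r • x := by rw [hx, smul_comm]

/-- `braSpan R S T` is the `R`-submodule `[S, T]` spanned by all brackets `⁅x, y⁆` with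
`x ∈ S`, `y ∈ T`. -/
def braSpan (R : Type*) {L : Type*} [CommRing R] [LieRing L] [LieAlgebra R L]
    (S T : Set L) : Submodule R L :=
  Submodule.span R {z | ∃ x ∈ S, ∃ y ∈ T, ⁅x, y⁆ = z}

/-- `iterBra R S T n` is the left-normed iterated bracket `[S, T, …, T]` with `T` occurring
`n` times (for `n = 0` it is the span of `S`).  In particular a subalgebra with underlying
set `C` is nilpotent of class at most `c` if and only if `iterBra R C C c = ⊥`, and
`iterBra R Set.univ C c` is the span `[L, C, …, C]`. -/
def iterBra (R : Type*) {L : Type*} [CommRing R] [LieRing L] [LieAlgebra R L]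
    (S T : Set L) : ℕ → Submodule R L
  | 0 => Submodule.span R S
  | n + 1 => braSpan R ((iterBra R S T n : Submodule R L) : Set L) T

/-- The conjugate subgroup `H^f = f⁻¹ H f`. -/
def conjSubgroup {A : Type*} [Group A] (f : A) (H : Subgroup A) : Subgroup A :=
  Subgroup.map (MulAut.conj f⁻¹).toMonoidHom H

open scoped Pointwise

section Frobenius

variable {G : Type*} [Group G] {F H : Subgroup G}

theorem eq_of_conj_eq_conj_of_frobenius
    (hfrob : ∀ x ∈ H, x ≠ 1 → ∀ f ∈ F, x * f = f * x → f = 1)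
    {f₁ f₂ h : G} (hf₁ : f₁ ∈ F) (hf₂ : f₂ ∈ F) (hh : h ∈ H) (hh1 : h ≠ 1)
    (heq : f₁⁻¹ * h * f₁ = f₂⁻¹ * h * f₂) : f₁ = f₂ := by
  have hcomm : h * (f₂ * f₁⁻¹) = f₂ * f₁⁻¹ * h := by
    calc h * (f₂ * f₁⁻¹) = f₂ * (f₂⁻¹ * h * f₂) * f₁⁻¹ := by group
      _ = f₂ * f₁⁻¹ * h := by rw [← heq]; group
  exact (mul_inv_eq_one.mp (hfrob h hh hh1 _ (mul_mem hf₂ (inv_mem hf₁)) hcomm)).symm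

theorem eq_of_conj_eq_conj_of_inf_eq_bot (hFnorm : F.Normal) (hFH : F ⊓ H = ⊥)
    {f₁ f₂ h₁ h₂ : G} (hf₁ : f₁ ∈ F) (hf₂ : f₂ ∈ F) (hh₁ : h₁ ∈ H) (hh₂ : h₂ ∈ H)
    (heq : f₁⁻¹ * h₁ * f₁ = f₂⁻¹ * h₂ * f₂) : h₁ = h₂ := by
  have hmk : (QuotientGroup.mk h₁ : G ⧸ F) = QuotientGroup.mk h₂ := by
    simpa [(QuotientGroup.eq_one_iff _).mpr hf₁, (QuotientGroup.eq_one_iff _).mpr hf₂] using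
      congrArg (QuotientGroup.mk : G → G ⧸ F) heq
  have hmem : h₁⁻¹ * h₂ ∈ F ⊓ H :=
    Subgroup.mem_inf.mpr ⟨QuotientGroup.eq.mp hmk, mul_mem (inv_mem hh₁) hh₂⟩
  rwa [hFH, Subgroup.mem_bot, inv_mul_eq_one] at hmem

theorem exists_conj_eq_of_notMem_kernel [Finite F] (hFnorm : F.Normal) (hFHtop : F ⊔ H = ⊤)
    (hfrob : ∀ x ∈ H, x ≠ 1 → ∀ f ∈ F, x * f = f * x → f = 1) {g : G} (hg : g ∉ F) :
    ∃ f ∈ F, ∃ h ∈ H, h ≠ 1 ∧ f⁻¹ * h * f = g := by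
  obtain ⟨a, ha, b, hb, rfl⟩ : g ∈ (F : Set G) * (H : Set G) := by
    rw [← Subgroup.normal_mul, hFHtop]; trivial
  have hb1 : b ≠ 1 := by rintro rfl; exact hg (by simpa using ha)
  -- `f⁻¹ b f = a b` is solved by counting: `f ↦ f⁻¹ b f b⁻¹` is injective on the finite `F`.
  let θ : F → F := fun f =>
    ⟨f⁻¹ * b * f * b⁻¹, by simpa [mul_assoc] using mul_mem (inv_mem f.2) (hFnorm.conj_mem _ f.2 b)⟩
  have hθ : θ.Injective := fun f₁ f₂ h => Subtype.ext <|
    eq_of_conj_eq_conj_of_frobenius hfrob f₁.2 f₂.2 hb hb1 <|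
      mul_right_cancel (congrArg Subtype.val h)
  obtain ⟨f, hf⟩ := (Finite.injective_iff_surjective.mp hθ) ⟨a, ha⟩
  refine ⟨f, f.2, b, hb, hb1, ?_⟩
  have hfa : (f : G)⁻¹ * b * f * b⁻¹ = a := congrArg Subtype.val hf
  rw [← hfa]
  group

theorem sum_conj_eq_sum_notMem_kernel [Fintype G] [Fintype F] [Fintype H] [DecidableEq H]
    [DecidablePred (· ∈ F)] (hFnorm : F.Normal) (hFH : F ⊓ H = ⊥) (hFHtop : F ⊔ H = ⊤)
    (hfrob : ∀ x ∈ H, x ≠ 1 → ∀ f ∈ F, x * f = f * x → f = 1)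
    {M : Type*} [AddCommMonoid M] (u : G → M) :
    ∑ x ∈ (Finset.univ : Finset F) ×ˢ Finset.univ.erase (1 : H), u ((x.1 : G)⁻¹ * x.2 * x.1) =
      ∑ g ∈ Finset.univ.filter (· ∉ F), u g := by
  refine Finset.sum_nbij (fun x => (x.1 : G)⁻¹ * x.2 * x.1) ?_ ?_ ?_ (fun _ _ => rfl)
  · rintro ⟨f, h⟩ hx
    simp only [Finset.mem_product, Finset.mem_erase, Finset.mem_filter, Finset.mem_univ,
      true_and, and_true] at hx ⊢
    intro hconjF
    have hh : (h : G) ∈ F ⊓ H := Subgroup.mem_inf.mpr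
      ⟨by simpa [mul_assoc] using hFnorm.conj_mem _ hconjF f, h.2⟩
    rw [hFH, Subgroup.mem_bot] at hh
    exact hx (Subtype.ext hh)
  · rintro ⟨f₁, h₁⟩ hx₁ ⟨f₂, h₂⟩ - heq
    change (f₁ : G)⁻¹ * h₁ * f₁ = (f₂ : G)⁻¹ * h₂ * f₂ at heq
    have hh₁ : h₁ ≠ 1 := (Finset.mem_erase.mp (Finset.mem_product.mp hx₁).2).1
    have hh := eq_of_conj_eq_conj_of_inf_eq_bot hFnorm hFH f₁.2 f₂.2 h₁.2 h₂.2 heq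
    have hf := eq_of_conj_eq_conj_of_frobenius hfrob f₁.2 f₂.2 h₁.2
      (fun h => hh₁ (Subtype.ext h)) (by rwa [← hh] at heq)
    exact Prod.ext (Subtype.ext hf) (Subtype.ext hh)
  · intro g hg
    obtain ⟨f, hf, h, hh, hh1, rfl⟩ :=
      exists_conj_eq_of_notMem_kernel hFnorm hFHtop hfrob (Finset.mem_filter.mp hg).2
    exact ⟨(⟨f, hf⟩, ⟨h, hh⟩), by simpa using hh1, rfl⟩

theorem sum_conj_complement_add_sum_kernel [Fintype G] [Fintype F] [Fintype H]
    (hFnorm : F.Normal) (hFH : F ⊓ H = ⊥) (hFHtop : F ⊔ H = ⊤)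
    (hfrob : ∀ x ∈ H, x ≠ 1 → ∀ f ∈ F, x * f = f * x → f = 1)
    {M : Type*} [AddCommMonoid M] (u : G → M) :
    ∑ f : F, ∑ h : H, u ((f : G)⁻¹ * h * f) + ∑ f : F, u f = ∑ g, u g + Fintype.card F • u 1 := by
  classical
  have hsplit (f : F) : ∑ h : H, u ((f : G)⁻¹ * h * f) =
      u 1 + ∑ h ∈ Finset.univ.erase (1 : H), u ((f : G)⁻¹ * h * f) := by
    rw [← Finset.add_sum_erase _ _ (Finset.mem_univ 1)]
    simp
  have hkernel : ∑ f : F, u f = ∑ g ∈ Finset.univ.filter (· ∈ F), u g :=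
    (Finset.sum_subtype _ (by simp) u).symm
  rw [Finset.sum_congr rfl fun f _ => hsplit f, Finset.sum_add_distrib, ← Finset.sum_product',
    sum_conj_eq_sum_notMem_kernel hFnorm hFH hFHtop hfrob, hkernel, Finset.sum_const,
    Finset.card_univ, add_comm _ (Fintype.card F • u 1), add_assoc,
    Finset.sum_filter_not_add_sum_filter, add_comm]

end Frobenius

namespace Representation

variable {k G V : Type*} [CommRing k] [Group G] [AddCommGroup V] [Module k V]
  (ρ : Representation k G V)

def stabilizer (v : V) : Subgroup G :=
  (MulAction.stabilizer (V →ₗ[k] V)ˣ v).comap ρ.asGroupHom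

theorem mem_invariants_comp_subtype_iff {S : Subgroup G} {v : V} :
    v ∈ invariants (ρ.comp S.subtype) ↔ S ≤ ρ.stabilizer v :=
  ⟨fun hv g hg => hv ⟨g, hg⟩, fun hS g => hS g.2⟩

theorem invariants_comp_subtype_antitone {S T : Subgroup G} (hST : S ≤ T) :
    invariants (ρ.comp T.subtype) ≤ invariants (ρ.comp S.subtype) := fun _ hv =>
  (mem_invariants_comp_subtype_iff ρ).mpr <| hST.trans <| (mem_invariants_comp_subtype_iff ρ).mp hv

theorem sum_mem_invariants [Fintype G] (v : V) : ∑ g, ρ g v ∈ ρ.invariants := fun g => by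
  simp only [map_sum, ← Module.End.mul_apply, ← map_mul]
  exact Fintype.sum_bijective _ (Group.mulLeft_bijective g) _ _ fun _ => rfl

theorem sum_conj_mem_invariants (S : Subgroup G) [Fintype S] (g : G) (v : V) :
    ∑ s : S, ρ (g⁻¹ * s * g) v ∈ invariants (ρ.comp (conjSubgroup g S).subtype) := by
  rintro ⟨_, s, hs, rfl⟩
  simp only [MonoidHom.coe_comp, Function.comp_apply, Subgroup.subtype_apply, map_sum,
    ← Module.End.mul_apply, ← map_mul]
  refine Fintype.sum_bijective _ (Group.mulLeft_bijective ⟨s, hs⟩) _ _ fun t => ?_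
  simp [mul_assoc]

theorem invariants_comp_subtype_le_sup [Finite G] {F H Z : Subgroup G} (hFnorm : F.Normal)
    (hFH : F ⊓ H = ⊥) (hFHtop : F ⊔ H = ⊤)
    (hfrob : ∀ x ∈ H, x ≠ 1 → ∀ f ∈ F, x * f = f * x → f = 1) (hZnorm : Z.Normal)
    (hF : IsUnit (Nat.card F : k)) :
    invariants (ρ.comp Z.subtype) ≤ invariants (ρ.comp F.subtype) ⊔
      ⨆ f ∈ F, invariants (ρ.comp (Z ⊔ conjSubgroup f H).subtype) := by
  classical
  have := Fintype.ofFinite G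
  intro v hv
  have hcount := sum_conj_complement_add_sum_kernel hFnorm hFH hFHtop hfrob (fun g => ρ g v)
  rw [map_one, Module.End.one_apply] at hcount
  have hdecomp : Fintype.card F • v =
      ∑ f : F, ∑ h : H, ρ ((f : G)⁻¹ * h * f) v + (∑ f : F, ρ f v - ∑ g, ρ g v) := by
    rw [add_sub, hcount, add_sub_cancel_left]
  rw [← Submodule.smul_mem_iff_of_isUnit _ hF, Nat.card_eq_fintype_card, Nat.cast_smul_eq_nsmul,
    hdecomp]
  refine add_mem (Submodule.mem_sup_right (Submodule.sum_mem _ fun f _ => ?_))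
    (Submodule.mem_sup_left (sub_mem ?_ ?_))
  · refine Submodule.mem_iSup_of_mem (f : G) (Submodule.mem_iSup_of_mem f.2 ?_)
    rw [mem_invariants_comp_subtype_iff, sup_le_iff, ← mem_invariants_comp_subtype_iff,
      ← mem_invariants_comp_subtype_iff]
    refine ⟨Submodule.sum_mem _ fun h _ => le_comap_invariants ρ Z _ hv, ?_⟩
    exact sum_conj_mem_invariants ρ H f v
  · exact sum_mem_invariants (ρ.comp F.subtype) v
  · exact fun f => sum_mem_invariants ρ v f

end Representation

section LieAction

variable {A R L : Type*} [Group A] [CommRing R] [LieRing L] [LieAlgebra R L]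
  (ρ : A → (L ≃ₗ⁅R⁆ L)) (hρone : ∀ x : L, ρ 1 x = x)
  (hρmul : ∀ g₁ g₂ : A, ∀ x : L, ρ (g₁ * g₂) x = ρ g₁ (ρ g₂ x))

def representationOfLieEquivs : Representation R A L where
  toFun g := (ρ g).toLinearEquiv.toLinearMap
  map_one' := LinearMap.ext hρone
  map_mul' g₁ g₂ := LinearMap.ext (hρmul g₁ g₂)

theorem fixSub_eq_invariants (S : Subgroup A) :
    fixSub ρ S = Representation.invariants
      ((representationOfLieEquivs ρ hρone hρmul).comp S.subtype) := by
  ext x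
  exact ⟨fun hx g => hx g g.2, fun hx g hg => hx ⟨g, hg⟩⟩

end LieAction

theorem zero_component_decomposition_general
    (p : ℕ)
    (A : Type*) [Group A] [Finite A] (F H : Subgroup A)
    (hFnorm : F.Normal) (hFH : F ⊓ H = ⊥) (hFHtop : F ⊔ H = ⊤)
    (hfrob : ∀ x ∈ H, x ≠ 1 → ∀ f ∈ F, x * f = f * x → f = 1)
    (hFcard : Nat.card F = p ^ 2)
    (Z : Subgroup A) (hZF : Z ≤ F) (hZnorm : Z.Normal)
    (φ : A) (hφZ : φ ∈ Z) (hφgen : Z ≤ Subgroup.zpowers φ)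
    (R : Type*) [CommRing R]
    (ω : R) (hpu : IsUnit (p : R))
    (L : Type*) [LieRing L] [LieAlgebra R L]
    (ρ : A → (L ≃ₗ⁅R⁆ L))
    (hρone : ∀ x : L, ρ 1 x = x)
    (hρmul : ∀ g₁ g₂ : A, ∀ x : L, ρ (g₁ * g₂) x = ρ g₁ (ρ g₂ x))
    (Li : ZMod p → Submodule R L)
    (hLi : ∀ i : ZMod p, Li i = eigSp (ρ φ) (ω ^ i.val))
    :
    Li 0 = fixSub ρ (F : Set A) ⊔
      ⨆ f ∈ F, fixSub ρ ((Z ⊔ conjSubgroup f H : Subgroup A) : Set A) := by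
  set σ := representationOfLieEquivs ρ hρone hρmul
  have hZ : Z = Subgroup.zpowers φ := le_antisymm hφgen (Subgroup.zpowers_le.mpr hφZ)
  have hL0 : Li 0 = Representation.invariants (σ.comp Z.subtype) := by
    ext x
    rw [σ.mem_invariants_comp_subtype_iff, hZ, Subgroup.zpowers_le, hLi, ZMod.val_zero, pow_zero]
    show ρ φ x = (1 : R) • x ↔ ρ φ x = x
    rw [one_smul]
  have hunit : IsUnit (Nat.card F : R) := by
    rw [hFcard, Nat.cast_pow]
    exact hpu.pow 2
  simp only [fixSub_eq_invariants ρ hρone hρmul, hL0]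
  exact le_antisymm (σ.invariants_comp_subtype_le_sup hFnorm hFH hFHtop hfrob hZnorm hunit)
    (sup_le (σ.invariants_comp_subtype_antitone hZF)
      (iSup₂_le fun f _ => σ.invariants_comp_subtype_antitone le_sup_left))

/-- Standing setup: a supersolvable Frobenius group `FH` (the finite group `A` with kernel
`F` elementary abelian of order `p^2` and cyclic complement `H` of order `q`), a subgroup
`Z ≤ F` of order `p` normal in `FH` with generator `φ`, a finite commutative ring `R` with
a primitive `p`-th root of unity `ω` in which `p` is invertible, a Lie algebra `L` over `R`
on which `FH` acts by Lie-algebra automorphisms via `ρ`, and the eigenspace decomposition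
`L = ⊕_{i ∈ ℤ/pℤ} L_i` of `ρ φ`.  Conclusion: `L_0 = C_L(F) + Σ_{f ∈ F} C_L(Z H^f)`. -/
theorem zero_component_decomposition
    (p : ℕ) (hp : p.Prime)
    (A : Type*) [Group A] [Finite A] (F H : Subgroup A)
    (hFnorm : F.Normal) (hFH : F ⊓ H = ⊥) (hFHtop : F ⊔ H = ⊤)
    (hFnt : F ≠ ⊥) (hHnt : H ≠ ⊥)
    (hfrob : ∀ x ∈ H, x ≠ 1 → ∀ f ∈ F, x * f = f * x → f = 1)
    (hss : IsSupersolvable A)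
    (hFcard : Nat.card F = p ^ 2) (hFexp : ∀ f ∈ F, f ^ p = 1)
    (hFab : ∀ f ∈ F, ∀ g ∈ F, f * g = g * f)
    (q : ℕ) (hHcard : Nat.card H = q) (hHcyc : IsCyclic H)
    (Z : Subgroup A) (hZF : Z ≤ F) (hZnorm : Z.Normal) (hZcard : Nat.card Z = p)
    (φ : A) (hφZ : φ ∈ Z) (hφgen : Z ≤ Subgroup.zpowers φ)
    (R : Type*) [CommRing R] [Finite R]
    (ω : R) (hω : IsPrimitiveRoot ω p) (hpu : IsUnit (p : R))
    (L : Type*) [LieRing L] [LieAlgebra R L]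
    (ρ : A → (L ≃ₗ⁅R⁆ L))
    (hρone : ∀ x : L, ρ 1 x = x)
    (hρmul : ∀ g₁ g₂ : A, ∀ x : L, ρ (g₁ * g₂) x = ρ g₁ (ρ g₂ x))
    (Li : ZMod p → Submodule R L)
    (hLi : ∀ i : ZMod p, Li i = eigSp (ρ φ) (ω ^ i.val))
    (hdec : DirectSum.IsInternal Li)
    :
    Li 0 = fixSub ρ (F : Set A) ⊔
      ⨆ f ∈ F, fixSub ρ ((Z ⊔ conjSubgroup f H : Subgroup A) : Set A) :=
  zero_component_decomposition_general p A F H hFnorm hFH hFHtop hfrob hFcard Z hZF hZnorm φ hφZ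
    hφgen R ω hpu L ρ hρone hρmul Li hLi
end

section
/- Under the standing setup, suppose additionally that C_L(x) is nilpotent of class at most d for every nontrivial x ∈ F. Then [L, C_L(F), …, C_L(F)] = 0, where C_L(F) occurs d times in the iterated bracket. -/
/-!
Write `F = ⟨φ, ξ⟩`. Summing the orbit sums `∑ₖ (φ ^ a * ξ) ^ k • v` over the `p` cyclic
subgroups `⟨φ ^ a * ξ⟩` gives `p • v` plus a vector `∑_b φ ^ b • w`, which is fixed by `φ`.
As `p` is invertible, `L` is the sum of the `C_L(x)`, `x ∈ F^#`. Each `C_L(x)` contains `C_L(F)`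
and is nilpotent of class at most `d`, so `[C_L(x), C_L(F), …, C_L(F)] = 0` for every `x`, and
the bracket is additive in its first argument.
-/

open Finset

section GeomSum
variable {S : Type*} {p : ℕ}

lemma sum_range_pow_mul_eq_geom_sum [Semiring S] (hp : p.Prime) {x : S} (hx : x ^ p = 1)
    {k : ℕ} (hk : ¬ p ∣ k) : ∑ a ∈ range p, x ^ (a * k) = ∑ a ∈ range p, x ^ a := by
  have := Fact.mk hp
  have hk0 : (k : ZMod p) ≠ 0 := by rwa [Ne, ZMod.natCast_eq_zero_iff]
  refine sum_nbij' (fun a => ((a : ZMod p) * k).val) (fun b => ((b : ZMod p) * (k : ZMod p)⁻¹).val)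
    (fun _ _ => mem_range.2 (ZMod.val_lt _)) (fun _ _ => mem_range.2 (ZMod.val_lt _)) ?_ ?_ ?_
  · intro a ha
    simp [mul_assoc, mul_inv_cancel₀ hk0, ZMod.val_cast_of_lt (mem_range.1 ha)]
  · intro b hb
    simp [mul_assoc, inv_mul_cancel₀ hk0, ZMod.val_cast_of_lt (mem_range.1 hb)]
  · intro a _
    rw [← Nat.cast_mul, ZMod.val_natCast, ← pow_eq_pow_mod _ hx]

/-- Summing the orbit sums of the `p` cyclic subgroups `⟨e ^ a * f⟩` counts the identity `p`
times and every element `e ^ b * f ^ c` with `c ≠ 0` once. -/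
lemma sum_geom_sum_pow_mul [Ring S] (hp : p.Prime) {e f : S} (hef : Commute e f)
    (he : e ^ p = 1) :
    ∑ a ∈ range p, ∑ k ∈ range p, (e ^ a * f) ^ k
      = p + (∑ b ∈ range p, e ^ b) * (∑ c ∈ range p, f ^ c - 1) := by
  obtain ⟨n, rfl⟩ : ∃ n, p = n + 1 := ⟨p - 1, (Nat.sub_add_cancel hp.one_le).symm⟩
  have hcol : ∀ k ∈ range n, ∑ a ∈ range (n + 1), e ^ (a * (k + 1))
      = ∑ b ∈ range (n + 1), e ^ b := fun k hk =>
    sum_range_pow_mul_eq_geom_sum hp he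
      (Nat.not_dvd_of_pos_of_lt k.succ_pos (by simpa using mem_range.1 hk))
  calc ∑ a ∈ range (n + 1), ∑ k ∈ range (n + 1), (e ^ a * f) ^ k
      = ∑ k ∈ range (n + 1), (∑ a ∈ range (n + 1), e ^ (a * k)) * f ^ k := by
        rw [sum_comm]
        simp only [sum_mul, (hef.pow_left _).mul_pow, pow_mul]
    _ = ∑ k ∈ range n, (∑ b ∈ range (n + 1), e ^ b) * f ^ (k + 1) + (n + 1 : ℕ) := by
        rw [sum_range_succ', sum_congr rfl fun k hk => by rw [hcol k hk]]
        simp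
    _ = _ := by
        rw [sum_range_succ' (fun c => f ^ c), ← mul_sum]
        simp only [pow_zero, add_sub_cancel_right]
        rw [add_comm]

end GeomSum

lemma geom_sum_apply_mem_ker_sub_one {R V : Type*} [CommRing R] [AddCommGroup V] [Module R V]
    {p : ℕ} {x : Module.End R V} (hx : x ^ p = 1) (v : V) :
    (∑ k ∈ range p, x ^ k) v ∈ LinearMap.ker (x - 1) := by
  rw [LinearMap.mem_ker, ← Module.End.mul_apply, mul_geom_sum, hx, sub_self,
    LinearMap.zero_apply]

theorem Representation.ker_sub_one_sup_iSup_eq_top {R G V : Type*} [CommRing R] [Monoid G]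
    [AddCommGroup V] [Module R V] (ρ : Representation R G V) {p : ℕ} (hp : p.Prime)
    (hpR : IsUnit (p : R)) {φ ξ : G} (hφξ : Commute φ ξ) (hφ : φ ^ p = 1) (hξ : ξ ^ p = 1) :
    LinearMap.ker (ρ φ - 1) ⊔ ⨆ a ∈ range p, LinearMap.ker (ρ (φ ^ a * ξ) - 1) = ⊤ := by
  have he : ρ φ ^ p = 1 := by rw [← map_pow, hφ, map_one]
  have hline : ∀ a, (ρ φ ^ a * ρ ξ) ^ p = 1 := fun a => by
    rw [← map_pow, ← map_mul, ← map_pow, ((hφξ.pow_left a).mul_pow), ← pow_mul, mul_comm,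
      pow_mul, hφ, hξ, one_pow, one_mul, map_one]
  obtain ⟨c, hc⟩ : ∃ c : R, c * p = 1 := ⟨_, hpR.val_inv_mul⟩
  refine eq_top_iff.2 fun v _ => ?_
  have hv : v = c • (∑ a ∈ range p, (∑ k ∈ range p, (ρ φ ^ a * ρ ξ) ^ k) v
      + (∑ b ∈ range p, ρ φ ^ b) ((1 - ∑ k ∈ range p, ρ ξ ^ k) v)) := by
    rw [← LinearMap.sum_apply, sum_geom_sum_pow_mul hp (hφξ.map ρ) he, LinearMap.add_apply, Module.End.mul_apply, add_assoc, ← map_add, ← LinearMap.add_apply,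
      sub_add_sub_cancel, sub_self, LinearMap.zero_apply, map_zero, add_zero,
      Module.End.natCast_apply, ← Nat.cast_smul_eq_nsmul R, smul_smul, hc, one_smul]
  rw [hv]
  refine Submodule.smul_mem _ _ (add_mem (Submodule.mem_sup_right (sum_mem fun a ha => ?_))
    (Submodule.mem_sup_left (geom_sum_apply_mem_ker_sub_one he _)))
  refine Submodule.mem_iSup_of_mem a (Submodule.mem_iSup_of_mem ha ?_)
  rw [map_mul, map_pow]
  exact geom_sum_apply_mem_ker_sub_one (hline a) v

section IteratedBrackets
variable {R L : Type*} [CommRing R] [LieRing L] [LieAlgebra R L]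

lemma braSpan_le_iff {S T : Set L} {P : Submodule R L} :
    braSpan R S T ≤ P ↔ ∀ x ∈ S, ∀ y ∈ T, ⁅x, y⁆ ∈ P := by
  simp only [braSpan, Submodule.span_le]
  exact ⟨fun h x hx y hy => h ⟨x, hx, y, hy, rfl⟩, fun h _ ⟨x, hx, y, hy, hz⟩ => hz ▸ h x hx y hy⟩

lemma braSpan_mono {S S' T T' : Set L} (hS : S ⊆ S') (hT : T ⊆ T') :
    braSpan R S T ≤ braSpan R S' T' :=
  braSpan_le_iff.2 fun x hx y hy => Submodule.subset_span ⟨x, hS hx, y, hT hy, rfl⟩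

lemma iterBra_mono {S S' T T' : Set L} (hS : S ⊆ S') (hT : T ⊆ T') :
    ∀ n, iterBra R S T n ≤ iterBra R S' T' n
  | 0 => Submodule.span_mono hS
  | n + 1 => braSpan_mono (iterBra_mono hS hT n) hT

lemma braSpan_iSup_le {ι : Sort*} (f : ι → Submodule R L) (T : Set L) :
    braSpan R (↑(⨆ i, f i) : Set L) T ≤ ⨆ i, braSpan R (f i : Set L) T :=
  braSpan_le_iff.2 fun x hx y hy =>
    Submodule.iSup_induction f (motive := fun x => ⁅x, y⁆ ∈ _) hx
      (fun i x hx => Submodule.mem_iSup_of_mem i (Submodule.subset_span ⟨x, hx, y, hy, rfl⟩))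
      (by simp) (fun x x' hx hx' => by rw [add_lie]; exact add_mem hx hx')

lemma iterBra_le_iSup {ι : Sort*} {S : Set L} (f : ι → Submodule R L) (T : Set L)
    (hS : S ⊆ ↑(⨆ i, f i)) : ∀ n, iterBra R S T n ≤ ⨆ i, iterBra R (f i : Set L) T n
  | 0 => by simpa [iterBra, Submodule.span_eq] using Submodule.span_le.2 hS
  | n + 1 => (braSpan_mono (iterBra_le_iSup f T hS n) subset_rfl).trans (braSpan_iSup_le _ T)

lemma iterBra_univ_eq_bot {ι : Sort*} (f : ι → Submodule R L) (hf : ⨆ i, f i = ⊤) {T : Set L}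
    {n : ℕ} (h : ∀ i, iterBra R (f i : Set L) T n = ⊥) : iterBra R Set.univ T n = ⊥ :=
  eq_bot_iff.2 <| (iterBra_le_iSup f T (by simp [hf]) n).trans (by simp [h])

end IteratedBrackets

lemma Subgroup.exists_ne_one_and_notMem_zpowers {G : Type*} [Group G] {F : Subgroup G} {p : ℕ}
    (hp : p.Prime) (hcard : Nat.card F = p ^ 2) (hexp : ∀ f ∈ F, f ^ p = 1) :
    ∃ φ ∈ F, ∃ ξ ∈ F, φ ≠ 1 ∧ ξ ∉ Subgroup.zpowers φ := by
  obtain hbot | ⟨φ, hφF, hφ1⟩ := F.bot_or_exists_ne_one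
  · rw [hbot, Subgroup.card_bot] at hcard
    exact absurd hcard (Nat.one_lt_pow two_ne_zero hp.one_lt).ne
  by_contra! h
  have hF : Subgroup.zpowers φ = F :=
    (Subgroup.zpowers_le.2 hφF).antisymm fun ξ hξ => h φ hφF ξ hξ hφ1
  have : p ^ 2 ≤ p := calc
    p ^ 2 = orderOf φ := by rw [← hcard, ← hF, Nat.card_zpowers]
    _ ≤ p := orderOf_le_of_pow_eq_one hp.pos (hexp φ hφF)
  exact (lt_self_pow₀ hp.one_lt one_lt_two).not_ge this

section LieAction
variable {A R L : Type*} [Group A] [CommRing R] [LieRing L] [LieAlgebra R L]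

lemma fixSub_anti (ρ : A → (L ≃ₗ⁅R⁆ L)) {S S' : Set A} (h : S ⊆ S') :
    fixSub ρ S' ≤ fixSub ρ S :=
  fun _ hx g hg => hx g (h hg)

def Representation.ofLieEquivs (ρ : A → (L ≃ₗ⁅R⁆ L)) (hone : ∀ x : L, ρ 1 x = x)
    (hmul : ∀ g₁ g₂ : A, ∀ x : L, ρ (g₁ * g₂) x = ρ g₁ (ρ g₂ x)) : Representation R A L where
  toFun g := (ρ g).toLieHom.toLinearMap
  map_one' := LinearMap.ext hone
  map_mul' g₁ g₂ := LinearMap.ext (hmul g₁ g₂)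

lemma Representation.ker_ofLieEquivs_sub_one_le_fixSub (ρ : A → (L ≃ₗ⁅R⁆ L))
    (hone : ∀ x : L, ρ 1 x = x) (hmul : ∀ g₁ g₂ : A, ∀ x : L, ρ (g₁ * g₂) x = ρ g₁ (ρ g₂ x))
    (g : A) : LinearMap.ker (ofLieEquivs ρ hone hmul g - 1) ≤ fixSub ρ {g} := by
  intro x hx h hh
  rw [Set.mem_singleton_iff.1 hh]
  exact sub_eq_zero.1 hx

end LieAction

theorem bracket_with_kernel_fixed_points_vanishes_general
    (p : ℕ) (hp : p.Prime)
    (A : Type*) [Group A] (F : Subgroup A)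
    (hFcard : Nat.card F = p ^ 2) (hFexp : ∀ f ∈ F, f ^ p = 1)
    (hFab : ∀ f ∈ F, ∀ g ∈ F, f * g = g * f)
    (R : Type*) [CommRing R]
    (hpu : IsUnit (p : R))
    (L : Type*) [LieRing L] [LieAlgebra R L]
    (ρ : A → (L ≃ₗ⁅R⁆ L))
    (hρone : ∀ x : L, ρ 1 x = x)
    (hρmul : ∀ g₁ g₂ : A, ∀ x : L, ρ (g₁ * g₂) x = ρ g₁ (ρ g₂ x))
    (d : ℕ)
    (hd : ∀ x ∈ F, x ≠ 1 →
      iterBra R (fixSub ρ {x} : Set L) (fixSub ρ {x} : Set L) d = ⊥) :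
    iterBra R (Set.univ : Set L) (fixSub ρ (F : Set A) : Set L) d = ⊥ := by
  obtain ⟨φ, hφF, ξ, hξF, hφ1, hξφ⟩ := F.exists_ne_one_and_notMem_zpowers hp hFcard hFexp
  have hφaξ : ∀ a : ℕ, φ ^ a * ξ ≠ 1 := fun a h =>
    hξφ (eq_inv_of_mul_eq_one_right h ▸ inv_mem (pow_mem (Subgroup.mem_zpowers φ) a))
  have hle := Representation.ker_ofLieEquivs_sub_one_le_fixSub ρ hρone hρmul
  refine iterBra_univ_eq_bot (fun x : {x // x ∈ F ∧ x ≠ 1} => fixSub ρ {x.1}) ?_ fun x =>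
    eq_bot_iff.2 <| (iterBra_mono subset_rfl (fixSub_anti ρ (Set.singleton_subset_iff.2 x.2.1)) d).trans
      (hd x.1 x.2.1 x.2.2).le
  rw [eq_top_iff, ← (Representation.ofLieEquivs ρ hρone hρmul).ker_sub_one_sup_iSup_eq_top hp hpu
    (hFab φ hφF ξ hξF) (hFexp φ hφF) (hFexp ξ hξF)]
  refine sup_le (le_iSup_of_le ⟨φ, hφF, hφ1⟩ (hle φ)) (iSup₂_le fun a _ => ?_)
  exact le_iSup_of_le ⟨φ ^ a * ξ, mul_mem (pow_mem hφF a) hξF, hφaξ a⟩ (hle _)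

/-- Standing setup: a supersolvable Frobenius group `FH` (the finite group `A` with kernel
`F` elementary abelian of order `p^2` and cyclic complement `H` of order `q`), a subgroup
`Z ≤ F` of order `p` normal in `FH` with generator `φ`, a finite commutative ring `R` with
a primitive `p`-th root of unity `ω` in which `p` is invertible, a Lie algebra `L` over `R`
on which `FH` acts by Lie-algebra automorphisms via `ρ`, and the eigenspace decomposition
`L = ⊕_{i ∈ ℤ/pℤ} L_i` of `ρ φ`.  If moreover `C_L(x)` is nilpotent of class at most `d`
for every `x ∈ F^#`, then `[L, C_L(F), …, C_L(F)] = 0` with `C_L(F)` occurring `d`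
times. -/
theorem bracket_with_kernel_fixed_points_vanishes
    (p : ℕ) (hp : p.Prime)
    (A : Type*) [Group A] [Finite A] (F H : Subgroup A)
    (hFnorm : F.Normal) (hFH : F ⊓ H = ⊥) (hFHtop : F ⊔ H = ⊤)
    (hFnt : F ≠ ⊥) (hHnt : H ≠ ⊥)
    (hfrob : ∀ x ∈ H, x ≠ 1 → ∀ f ∈ F, x * f = f * x → f = 1)
    (hss : IsSupersolvable A)
    (hFcard : Nat.card F = p ^ 2) (hFexp : ∀ f ∈ F, f ^ p = 1)
    (hFab : ∀ f ∈ F, ∀ g ∈ F, f * g = g * f)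
    (q : ℕ) (hHcard : Nat.card H = q) (hHcyc : IsCyclic H)
    (Z : Subgroup A) (hZF : Z ≤ F) (hZnorm : Z.Normal) (hZcard : Nat.card Z = p)
    (φ : A) (hφZ : φ ∈ Z) (hφgen : Z ≤ Subgroup.zpowers φ)
    (R : Type*) [CommRing R] [Finite R]
    (ω : R) (hω : IsPrimitiveRoot ω p) (hpu : IsUnit (p : R))
    (L : Type*) [LieRing L] [LieAlgebra R L]
    (ρ : A → (L ≃ₗ⁅R⁆ L))
    (hρone : ∀ x : L, ρ 1 x = x)
    (hρmul : ∀ g₁ g₂ : A, ∀ x : L, ρ (g₁ * g₂) x = ρ g₁ (ρ g₂ x))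
    (Li : ZMod p → Submodule R L)
    (hLi : ∀ i : ZMod p, Li i = eigSp (ρ φ) (ω ^ i.val))
    (hdec : DirectSum.IsInternal Li)
    (d : ℕ)
    (hd : ∀ x ∈ F, x ≠ 1 →
      iterBra R (fixSub ρ {x} : Set L) (fixSub ρ {x} : Set L) d = ⊥) :
    iterBra R (Set.univ : Set L) (fixSub ρ (F : Set A) : Set L) d = ⊥ :=
  bracket_with_kernel_fixed_points_vanishes_general p hp A F hFcard hFexp hFab R hpu L ρ hρone hρmul
    d hd
end
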